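/- Let A : ℝ² → ℝ² be the linear map with matrix [[11, 2], [−6, −1]] in the standard basis, and let C = {x·(7, −3) + y·(1, 3) : x, y ∈ ℝ, x > 0, y > 0} ⊆ ℝ² be the open convex cone spanned by (7, −3) and (1, 3). Then for all natural numbers i ≠ j, the cones A^i(C) and A^j(C) are disjoint; equivalently, A^k(C) ∩ C = ∅ for every integer k ≥ 1. -/
import Mathlib

/-- Key numeric lemma: with `s = √6`, no point of the cone `C` (coordinates
`x, y` in the basis `(7,-3), (1,3)`) can have eigen-coordinates equal to
`λ^m`, `μ^m` times those of another point of `C`, for `m ≥ 1`. -/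
private lemma flop_aux_key (s : ℝ) (hs2 : s ^ 2 = 6) (hs0 : 0 ≤ s)
    (x y x' y' : ℝ) (hx : 0 < x) (hy : 0 < y) (hx' : 0 < x') (hy' : 0 < y')
    (m : ℕ) (hm : 1 ≤ m)
    (h1 : (7*s+18)*x + (s+6)*y = (5+2*s)^m * ((7*s+18)*x' + (s+6)*y'))
    (h2 : (7*s-18)*x + (s-6)*y = (5-2*s)^m * ((7*s-18)*x' + (s-6)*y')) : False := by
  have hlb : 2.4 < s := by nlinarith
  have hub : s < 2.45 := by nlinarith
  have hl1 : (1:ℝ) < 5+2*s := by linarith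
  have hu0 : (0:ℝ) < 5-2*s := by linarith
  have hu1 : (5-2*s : ℝ) ≤ 1 := by linarith
  have hc : (0:ℝ) < 103-42*s := by linarith
  have hlm : (5+2*s) ≤ (5+2*s)^m := le_self_pow₀ hl1.le (by omega)
  have hum : (5-2*s)^m ≤ (5-2*s) := pow_le_of_le_one hu0.le hu1 (by omega)
  have hP : 0 < (7*s+18)*x' + (s+6)*y' := by
    have c1 := mul_pos (show (0:ℝ) < 7*s+18 by linarith) hx'
    have c2 := mul_pos (show (0:ℝ) < s+6 by linarith) hy'
    linarith
  have hQ : 0 < (18-7*s)*x' + (6-s)*y' := by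
    have c1 := mul_pos (show (0:ℝ) < 18-7*s by linarith) hx'
    have c2 := mul_pos (show (0:ℝ) < 6-s by linarith) hy'
    linarith
  -- upper bound side: 5·((18-7s)x + (6-s)y) < (59-24s)·P
  have h2' : (18-7*s)*x + (6-s)*y = (5-2*s)^m * ((18-7*s)*x' + (6-s)*y') := by
    linear_combination -h2
  have hQPeq : (7-2*s)*((7*s+18)*x' + (s+6)*y') - 5*((18-7*s)*x' + (6-s)*y')
      = 48*(x'*(s-1)) := by
    linear_combination (-(14*x' + 2*y')) * hs2
  have hQP : 5*((18-7*s)*x' + (6-s)*y') < (7-2*s)*((7*s+18)*x' + (s+6)*y') := by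
    have := mul_pos hx' (show (0:ℝ) < s - 1 by linarith)
    linarith
  have e1 : (5-2*s)^m * ((18-7*s)*x' + (6-s)*y')
      ≤ (5-2*s) * ((18-7*s)*x' + (6-s)*y') :=
    mul_le_mul_of_nonneg_right hum hQ.le
  have e2 : (5-2*s) * (5*((18-7*s)*x' + (6-s)*y'))
      < (5-2*s) * ((7-2*s)*((7*s+18)*x' + (s+6)*y')) :=
    (mul_lt_mul_iff_right₀ hu0).mpr hQP
  have e3 : (5-2*s) * ((7-2*s)*((7*s+18)*x' + (s+6)*y'))
      = (59-24*s) * ((7*s+18)*x' + (s+6)*y') := by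
    linear_combination (4*((7*s+18)*x' + (s+6)*y')) * hs2
  have hup : 5*((18-7*s)*x + (6-s)*y) < (59-24*s)*((7*s+18)*x' + (s+6)*y') := by
    rw [h2']; linarith
  -- lower bound side: (11-4s)·P ≤ (103-42s)·F(w) < 5·((18-7s)x + (6-s)y)
  have hid : 5*((18-7*s)*x + (6-s)*y)
      = (103-42*s)*((7*s+18)*x+(s+6)*y) + 48*(y*(3*s-7)) := by
    linear_combination (294*x + 42*y) * hs2
  have h47 : 0 < y*(3*s-7) := mul_pos hy (by linarith)
  have hlow : (103-42*s)*((7*s+18)*x+(s+6)*y) < 5*((18-7*s)*x + (6-s)*y) := by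
    rw [hid]; linarith
  have e4 : (103-42*s)*((7*s+18)*x+(s+6)*y)
      = (103-42*s)*((5+2*s)^m * ((7*s+18)*x' + (s+6)*y')) := by rw [h1]
  have e5 : (103-42*s)*((5+2*s) * ((7*s+18)*x' + (s+6)*y'))
      ≤ (103-42*s)*((5+2*s)^m * ((7*s+18)*x' + (s+6)*y')) :=
    mul_le_mul_of_nonneg_left (mul_le_mul_of_nonneg_right hlm hP.le) hc.le
  have e6 : (103-42*s)*((5+2*s) * ((7*s+18)*x' + (s+6)*y'))
      = (11-4*s) * ((7*s+18)*x' + (s+6)*y') := by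
    linear_combination (-84*((7*s+18)*x' + (s+6)*y')) * hs2
  -- combine: (11-4s)P ≤ cF < 5L < (59-24s)P, yet (59-24s)P < (11-4s)P
  have hfin : (59-24*s)*((7*s+18)*x' + (s+6)*y')
      < (11-4*s) * ((7*s+18)*x' + (s+6)*y') := by
    have := mul_pos (show (0:ℝ) < 20*s - 48 by linarith) hP
    nlinarith [this]
  linarith

/-- Let `A` be the linear map of `ℝ²` with matrix `[[11, 2], [-6, -1]]` and let
`C` be the open convex cone spanned by `(7, -3)` and `(1, 3)`. Then the cones
`A^i(C)` for `i : ℕ` are pairwise disjoint; equivalently, `A^k(C) ∩ C = ∅` for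
every `k ≥ 1`. -/
theorem flop_iterates_of_ample_cone_disjoint :
    let A : Matrix (Fin 2) (Fin 2) ℝ := !![11, 2; -6, -1]
    let C : Set (Fin 2 → ℝ) :=
      {v | ∃ x y : ℝ, 0 < x ∧ 0 < y ∧ v = x • ![(7 : ℝ), -3] + y • ![(1 : ℝ), 3]}
    (∀ i j : ℕ, i ≠ j → (A ^ i).mulVec '' C ∩ (A ^ j).mulVec '' C = ∅) ∧
    (∀ k : ℕ, 1 ≤ k → (A ^ k).mulVec '' C ∩ C = ∅) := by
  intro A C
  set s := Real.sqrt 6 with hs_def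
  have hs2 : s ^ 2 = 6 := Real.sq_sqrt (by norm_num)
  have hs0 : (0:ℝ) ≤ s := Real.sqrt_nonneg 6
  have hlb : 2.4 < s := by nlinarith
  have hub : s < 2.45 := by nlinarith
  -- one-step action on the eigen-functionals
  have hstep : ∀ v : Fin 2 → ℝ,
      ((s+3)*(A.mulVec v) 0 + (A.mulVec v) 1 = (5+2*s) * ((s+3)*v 0 + v 1)) ∧
      ((s-3)*(A.mulVec v) 0 - (A.mulVec v) 1 = (5-2*s) * ((s-3)*v 0 - v 1)) := by
    intro v
    have h0 : (A.mulVec v) 0 = 11*v 0 + 2*v 1 := by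
      simp [A, Matrix.mulVec, dotProduct, Fin.sum_univ_two]
      try ring
    have h1 : (A.mulVec v) 1 = -6*v 0 - v 1 := by
      simp [A, Matrix.mulVec, dotProduct, Fin.sum_univ_two]
      try ring
    rw [h0, h1]
    constructor
    · linear_combination (-2*v 0) * hs2
    · linear_combination (2*v 0) * hs2
  -- iterated action
  have hF : ∀ (k : ℕ) (v : Fin 2 → ℝ),
      (s+3)*((A^k).mulVec v) 0 + ((A^k).mulVec v) 1
        = (5+2*s)^k * ((s+3)*v 0 + v 1) := by
    intro k
    induction k with
    | zero => intro v; simp [Matrix.one_mulVec]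
    | succ n ih =>
        intro v
        rw [pow_succ, ← Matrix.mulVec_mulVec, ih (A.mulVec v), (hstep v).1]
        ring
  have hG : ∀ (k : ℕ) (v : Fin 2 → ℝ),
      (s-3)*((A^k).mulVec v) 0 - ((A^k).mulVec v) 1
        = (5-2*s)^k * ((s-3)*v 0 - v 1) := by
    intro k
    induction k with
    | zero => intro v; simp [Matrix.one_mulVec]
    | succ n ih =>
        intro v
        rw [pow_succ, ← Matrix.mulVec_mulVec, ih (A.mulVec v), (hstep v).2]
        ring
  -- main disjointness for i < j
  have main : ∀ i j : ℕ, i < j →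
      (A ^ i).mulVec '' C ∩ (A ^ j).mulVec '' C = ∅ := by
    intro i j hij
    rw [Set.eq_empty_iff_forall_notMem]
    rintro u ⟨⟨w, hwC, hwu⟩, ⟨w', hw'C, hw'u⟩⟩
    obtain ⟨x, y, hx, hy, hw⟩ := hwC
    obtain ⟨x', y', hx', hy', hw'⟩ := hw'C
    have hw00 : w 0 = 7*x + y := by rw [hw]; simp; try ring
    have hw01 : w 1 = -3*x + 3*y := by rw [hw]; simp; try ring
    have hw'0 : w' 0 = 7*x' + y' := by rw [hw']; simp; try ring
    have hw'1 : w' 1 = -3*x' + 3*y' := by rw [hw']; simp; try ring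
    have eF : (5+2*s)^i * ((s+3)*w 0 + w 1) = (5+2*s)^j * ((s+3)*w' 0 + w' 1) := by
      rw [← hF i w, ← hF j w', hwu, hw'u]
    have eG : (5-2*s)^i * ((s-3)*w 0 - w 1) = (5-2*s)^j * ((s-3)*w' 0 - w' 1) := by
      rw [← hG i w, ← hG j w', hwu, hw'u]
    have hji : j = i + (j - i) := by omega
    rw [hji, pow_add, mul_assoc] at eF eG
    have hlpos : (0:ℝ) < (5+2*s)^i := pow_pos (by linarith) i
    have hupos : (0:ℝ) < (5-2*s)^i := pow_pos (by linarith) i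
    have eF' : (s+3)*w 0 + w 1 = (5+2*s)^(j-i) * ((s+3)*w' 0 + w' 1) :=
      mul_left_cancel₀ hlpos.ne' eF
    have eG' : (s-3)*w 0 - w 1 = (5-2*s)^(j-i) * ((s-3)*w' 0 - w' 1) :=
      mul_left_cancel₀ hupos.ne' eG
    rw [hw00, hw01, hw'0, hw'1] at eF' eG'
    refine flop_aux_key s hs2 hs0 x y x' y' hx hy hx' hy' (j-i) (by omega) ?_ ?_
    · linear_combination eF'
    · linear_combination eG'
  constructor
  · intro i j hij
    rcases lt_or_gt_of_ne hij with h | h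
    · exact main i j h
    · rw [Set.inter_comm]; exact main j i h
  · intro k hk
    have h0 : (A ^ 0).mulVec '' C = C := by
      simp [Matrix.one_mulVec]
    have := main 0 k hk
    rw [h0] at this
    rw [Set.inter_comm]
    exact this
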